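/- arXiv:2109.12663 — 2 statements merged into one kernel-verified Lean document; each statement's English description precedes it below -/
import Mathlib

section
/- Let k be a power of 2 and let M be a finite multiset of positive integers, each a power of 2, each at most k, whose sum is at least k. Order the elements of M in decreasing order as v_1 ≥ v_2 ≥ ... ≥ v_{|M|}. Then there exists an index ℓ ≤ |M| such that v_1 + v_2 + ... + v_ℓ = k. -/
lemma pow2_dvd_of_le {a b : ℕ} (ha : ∃ i : ℕ, a = 2 ^ i) (hb : ∃ j : ℕ, b = 2 ^ j)
    (hab : a ≤ b) : a ∣ b := by
  obtain ⟨i, rfl⟩ := ha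
  obtain ⟨j, rfl⟩ := hb
  exact pow_dvd_pow 2 ((Nat.pow_le_pow_iff_right one_lt_two).mp hab)

/-- ServerFilling packing lemma: if `k` is a power of 2 and `M` is a multiset of
positive integers, each a power of 2 and each at most `k`, with total sum at least `k`,
then for any listing `l` of `M` in decreasing order, some prefix sums to exactly `k`. -/
theorem serverFilling_packing (k : ℕ) (hk : ∃ i : ℕ, k = 2 ^ i)
    (M : Multiset ℕ)
    (hpow : ∀ v ∈ M, ∃ i : ℕ, v = 2 ^ i)
    (hle : ∀ v ∈ M, v ≤ k)
    (hsum : k ≤ M.sum)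
    (l : List ℕ) (hl : (l : Multiset ℕ) = M)
    (hsorted : l.Pairwise (· ≥ ·)) :
    ∃ ℓ ≤ l.length, (l.take ℓ).sum = k := by
  classical
  have hk1 : 1 ≤ k := by obtain ⟨i, rfl⟩ := hk; exact Nat.one_le_two_pow
  have hlsum : l.sum = M.sum := by rw [← hl]; simp
  have hP : ∃ n, k ≤ (l.take n).sum := ⟨l.length, by simpa [hlsum] using hsum⟩
  set ℓ := Nat.find hP with hℓdef
  have hℓ : k ≤ (l.take ℓ).sum := Nat.find_spec hP
  have hℓpos : 0 < ℓ := by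
    rcases Nat.eq_zero_or_pos ℓ with h | h
    · rw [h] at hℓ; simp at hℓ; omega
    · exact h
  have hℓle : ℓ ≤ l.length := by
    by_contra h
    push_neg at h
    exact Nat.find_min hP h (by simpa [hlsum] using hsum)
  set m := ℓ - 1 with hmdef
  have hm : m < l.length := by omega
  have hprev : ¬ k ≤ (l.take m).sum := Nat.find_min hP (by omega)
  push_neg at hprev
  set v := l.get ⟨m, hm⟩ with hvdef
  have hsucc : (l.take ℓ).sum = (l.take m).sum + v := by
    have hℓm : ℓ = m + 1 := by omega
    rw [hℓm]
    exact List.sum_take_succ l m hm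
  have hvl : v ∈ l := List.get_mem l ⟨m, hm⟩
  have hvM : v ∈ M := by rw [← hl]; exact hvl
  have hvk : v ∣ k := pow2_dvd_of_le (hpow v hvM) hk (hle v hvM)
  have hdvd : v ∣ (l.take m).sum := by
    apply List.dvd_sum
    intro x hx
    obtain ⟨j, hj, hjx⟩ := List.mem_iff_getElem.mp hx
    have hjm : j < m := by
      have := hj
      simp [List.length_take] at this
      omega
    have hjl : j < l.length := lt_trans hjm hm
    have hxval : x = l[j] := by
      rw [← hjx]
      exact List.getElem_take
    have hxl : x ∈ l := by rw [hxval]; exact List.getElem_mem hjl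
    have hxM : x ∈ M := by rw [← hl]; exact hxl
    have hvx : v ≤ x := by
      rw [hxval]
      exact List.pairwise_iff_getElem.mp hsorted j m hjl hm hjm
    exact pow2_dvd_of_le (hpow v hvM) (hpow x hxM) hvx
  have hvle : v ≤ k - (l.take m).sum := by
    apply Nat.le_of_dvd (by omega)
    exact Nat.dvd_sub hvk hdvd
  refine ⟨ℓ, hℓle, ?_⟩
  omega
end

section
/- Let S be a Weibull-type random variable with tail P(S > a) = e^{−a^c} for a ≥ 0 and parameter c > 0. If c ≥ 1 then sup_{a ≥ 0} E[S − a | S > a] is finite, while if c < 1 then sup_{a ≥ 0} E[S − a | S > a] = ∞. -/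
open Real MeasureTheory Set

lemma wb_integrable {c : ℝ} (hc : 0 < c) :
    IntegrableOn (fun x : ℝ => Real.exp (-(x ^ c))) (Set.Ioi 0) := by
  rw [← integrableOn_Ioi_comp_rpow_iff _ (one_div_ne_zero hc.ne')]
  have h : IntegrableOn (fun x : ℝ => |1 / c| * (Real.exp (-x) * x ^ (1 / c - 1)))
      (Set.Ioi 0) :=
    (Real.GammaIntegral_convergent (s := 1 / c) (by positivity)).const_mul |1 / c|
  refine h.congr_fun (fun x hx => ?_) measurableSet_Ioi
  have hx0 : (0 : ℝ) < x := hx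
  have hxx : (x ^ (1 / c)) ^ c = x := by
    rw [← Real.rpow_mul hx0.le, one_div_mul_cancel hc.ne', Real.rpow_one]
  rw [smul_eq_mul, hxx]
  ring

lemma wb_shift (f : ℝ → ℝ) (a : ℝ) :
    ∫ x in Set.Ioi a, f (x - a) = ∫ x in Set.Ioi (0 : ℝ), f x := by
  have h := (measurePreserving_add_right (volume : Measure ℝ) a).setIntegral_preimage_emb
      (measurableEmbedding_addRight a) (fun y => f (y - a)) (Set.Ioi a)
  have hp : (fun x : ℝ => x + a) ⁻¹' Set.Ioi a = Set.Ioi 0 := by ext x; simp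
  rw [hp] at h
  simp only [add_sub_cancel_right] at h
  exact h.symm

lemma wb_shift_int {f : ℝ → ℝ} (a : ℝ) (h : IntegrableOn f (Set.Ioi 0)) :
    IntegrableOn (fun x => f (x - a)) (Set.Ioi a) := by
  have hi := ((measurePreserving_add_right (volume : Measure ℝ) a).integrableOn_comp_preimage
      (measurableEmbedding_addRight a) (f := fun y : ℝ => f (y - a)) (s := Set.Ioi a))
  rw [← hi]
  have hp : (fun x : ℝ => x + a) ⁻¹' Set.Ioi a = Set.Ioi 0 := by ext x; simp
  rw [hp]
  exact h.congr_fun (fun x _ => by simp) measurableSet_Ioi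

lemma wb_superadd {c : ℝ} (hc : 1 ≤ c) {a t : ℝ} (ha : 0 ≤ a) (ht : 0 ≤ t) :
    a ^ c + t ^ c ≤ (a + t) ^ c := by
  lift a to NNReal using ha
  lift t to NNReal using ht
  exact_mod_cast NNReal.add_rpow_le_rpow_add a t hc


/-- For a Weibull-type distribution with tail `P(S > a) = exp(-a^c)` for `a ≥ 0`:
if `c ≥ 1` the expected remaining size
`E[S - a ∣ S > a] = (∫_a^∞ exp(-x^c) dx) / exp(-a^c)` is bounded over all ages
`a ≥ 0`, while if `c < 1` it is unbounded. -/
theorem weibull_rem_sup (c : ℝ) (hc : 0 < c) :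
    (1 ≤ c → ∃ C : ℝ, ∀ a : ℝ, 0 ≤ a →
      (∫ x in Set.Ioi a, Real.exp (-(x ^ c))) / Real.exp (-(a ^ c)) ≤ C) ∧
    (c < 1 → ∀ C : ℝ, ∃ a : ℝ, 0 ≤ a ∧
      C ≤ (∫ x in Set.Ioi a, Real.exp (-(x ^ c))) / Real.exp (-(a ^ c))) := by
  constructor
  · -- c ≥ 1 : bounded
    intro hc1
    refine ⟨∫ t in Set.Ioi (0 : ℝ), Real.exp (-(t ^ c)), fun a ha => ?_⟩
    rw [div_le_iff₀ (Real.exp_pos _)]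
    have hmono : (∫ x in Set.Ioi a, Real.exp (-(x ^ c)))
        ≤ ∫ x in Set.Ioi a, Real.exp (-(a ^ c)) * Real.exp (-((x - a) ^ c)) := by
      refine setIntegral_mono_on ((wb_integrable hc).mono_set (Set.Ioi_subset_Ioi ha))
        ((wb_shift_int a (wb_integrable hc)).const_mul _) measurableSet_Ioi ?_
      intro x hx
      have hx' : a < x := hx
      have hxa : (0 : ℝ) ≤ x - a := by linarith
      rw [← Real.exp_add]
      apply Real.exp_le_exp.mpr
      have hsup := wb_superadd hc1 ha hxa
      have hxeq : a + (x - a) = x := by ring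
      rw [hxeq] at hsup
      linarith
    have heq : (∫ x in Set.Ioi a, Real.exp (-(a ^ c)) * Real.exp (-((x - a) ^ c)))
        = Real.exp (-(a ^ c)) * ∫ t in Set.Ioi (0 : ℝ), Real.exp (-(t ^ c)) := by
      rw [integral_const_mul, wb_shift (fun t => Real.exp (-(t ^ c))) a]
    rw [mul_comm]
    exact hmono.trans heq.le
  · -- c < 1 : unbounded
    intro hc1 C
    have h1c : 0 < 1 - c := by linarith
    set D := max C 1 with hD_def
    have hD1 : (1 : ℝ) ≤ D := le_max_right _ _
    have hDC : C ≤ D := le_max_left _ _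
    have hexpc : (1 : ℝ) ≤ Real.exp c := Real.one_le_exp hc.le
    have hDe : (1 : ℝ) ≤ D * Real.exp c := by nlinarith
    set a := (D * Real.exp c) ^ (1 / (1 - c)) with ha_def
    have ha1 : (1 : ℝ) ≤ a := Real.one_le_rpow hDe (by positivity)
    have ha0 : (0 : ℝ) < a := lt_of_lt_of_le one_pos ha1
    have hLD : a ^ (1 - c) = D * Real.exp c := by
      rw [ha_def, ← Real.rpow_mul (by positivity), one_div_mul_cancel h1c.ne', Real.rpow_one]
    have hL0 : (0 : ℝ) < a ^ (1 - c) := Real.rpow_pos_of_pos ha0 _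
    have hac0 : (0 : ℝ) < a ^ c := Real.rpow_pos_of_pos ha0 _
    -- key inequality : (a + a^(1-c))^c ≤ a^c + c
    have hpow : a ^ c * a ^ (1 - c) = a := by
      rw [← Real.rpow_add ha0]
      norm_num
    have hkey : (a + a ^ (1 - c)) ^ c ≤ a ^ c + c := by
      have h1 : a + a ^ (1 - c) = a * (1 + a ^ (1 - c) / a) := by field_simp
      rw [h1, Real.mul_rpow ha0.le (by positivity)]
      have hb : (1 + a ^ (1 - c) / a) ^ c ≤ 1 + c * (a ^ (1 - c) / a) :=
        rpow_one_add_le_one_add_mul_self (by have := div_nonneg hL0.le ha0.le; linarith) hc.le hc1.le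
      have h2 : a ^ c * (c * (a ^ (1 - c) / a)) = c := by
        rw [show a ^ c * (c * (a ^ (1 - c) / a)) = c * (a ^ c * a ^ (1 - c)) / a by ring,
          hpow, mul_div_assoc, div_self ha0.ne', mul_one]
      nlinarith
    -- lower bound for the integral
    have hint : IntegrableOn (fun x : ℝ => Real.exp (-(x ^ c))) (Set.Ioi a) :=
      (wb_integrable hc).mono_set (Set.Ioi_subset_Ioi ha0.le)
    have hsub : (∫ x in Set.Ioc a (a + a ^ (1 - c)), Real.exp (-(x ^ c)))
        ≤ ∫ x in Set.Ioi a, Real.exp (-(x ^ c)) := by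
      refine setIntegral_mono_set hint
        (Filter.Eventually.of_forall fun x => (Real.exp_pos _).le)
        (HasSubset.Subset.eventuallyLE Set.Ioc_subset_Ioi_self)
    have hconst : a ^ (1 - c) * Real.exp (-((a + a ^ (1 - c)) ^ c))
        ≤ ∫ x in Set.Ioc a (a + a ^ (1 - c)), Real.exp (-(x ^ c)) := by
      have h1 : (∫ _x in Set.Ioc a (a + a ^ (1 - c)), Real.exp (-((a + a ^ (1 - c)) ^ c)))
          = a ^ (1 - c) * Real.exp (-((a + a ^ (1 - c)) ^ c)) := by
        rw [setIntegral_const, measureReal_def, Real.volume_Ioc, smul_eq_mul]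
        congr 1
        rw [ENNReal.toReal_ofReal (by linarith)]
        ring
      rw [← h1]
      refine setIntegral_mono_on (integrableOn_const ?_)
        (hint.mono_set Set.Ioc_subset_Ioi_self) measurableSet_Ioc ?_
      · rw [Real.volume_Ioc]; exact ENNReal.ofReal_ne_top
      · intro x hx
        refine Real.exp_le_exp.mpr (neg_le_neg ?_)
        exact Real.rpow_le_rpow (by linarith [hx.1]) hx.2 hc.le
    refine ⟨a, ha0.le, ?_⟩
    rw [le_div_iff₀ (Real.exp_pos _)]
    calc C * Real.exp (-(a ^ c)) ≤ D * Real.exp (-(a ^ c)) :=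
          mul_le_mul_of_nonneg_right hDC (Real.exp_pos _).le
      _ = a ^ (1 - c) * Real.exp (-(a ^ c + c)) := by
          rw [hLD, mul_assoc, ← Real.exp_add]
          congr 2
          ring
      _ ≤ a ^ (1 - c) * Real.exp (-((a + a ^ (1 - c)) ^ c)) := by
          refine mul_le_mul_of_nonneg_left (Real.exp_le_exp.mpr (by linarith)) hL0.le
      _ ≤ ∫ x in Set.Ioc a (a + a ^ (1 - c)), Real.exp (-(x ^ c)) := hconst
      _ ≤ ∫ x in Set.Ioi a, Real.exp (-(x ^ c)) := hsub
end
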